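/- arXiv:1408.0305 — 6 statements merged into one kernel-verified Lean document; each statement's English description precedes it below -/
import Mathlib

section
/- For complex numbers p, q, z with |p| < 1, |q| < 1, z ≠ 0, the quadratic functional equation Γ_{p,q}(z) = Γ_{p,q²}(z) · Γ_{p,q²}(qz) holds. -/
/-!
Split the double product defining `Γ_{p,q}(z)` according to the parity of `j`. With
`s = p^i q^{2k}`, both halves are products of ratios `(1 - a s) / (1 - c s)`; since such products
converge whenever `s` is summable, the numerators of the two halves may be exchanged, and the
resulting products are exactly `Γ_{p,q²}(z)` and `Γ_{p,q²}(qz)`.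
-/

/-- The elliptic Gamma function
`Γ_{p,q}(z) = ∏_{i,j ≥ 0} (1 - p^{i+1} q^{j+1}/z)/(1 - p^i q^j z)`. -/
noncomputable def ellGamma (p q z : ℂ) : ℂ :=
  ∏' ij : ℕ × ℕ,
    ((1 - p ^ (ij.1 + 1) * q ^ (ij.2 + 1) / z) / (1 - p ^ ij.1 * q ^ ij.2 * z))

open Filter Topology Asymptotics

theorem tprod_even_mul_odd_snd {M α : Type*} [CommMonoid M] [TopologicalSpace M]
    [ContinuousMul M] [T2Space M] {f : α × ℕ → M}
    (he : Multipliable fun x : α × ℕ ↦ f (x.1, 2 * x.2))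
    (ho : Multipliable fun x : α × ℕ ↦ f (x.1, 2 * x.2 + 1)) :
    ∏' x, f x = (∏' x : α × ℕ, f (x.1, 2 * x.2)) * ∏' x : α × ℕ, f (x.1, 2 * x.2 + 1) := by
  let e : (α × ℕ) ⊕ (α × ℕ) ≃ α × ℕ :=
    (Equiv.prodSumDistrib α ℕ ℕ).symm.trans ((Equiv.refl α).prodCongr Equiv.natSumNatEquivNat)
  exact (e.hasProd_iff.mp (he.hasProd.sum ho.hasProd)).tprod_eq

theorem summable_div_one_sub_mul {ι : Type*} {t : ι → ℂ} (ht : Summable t) (v : ℂ) :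
    Summable fun i ↦ t i / (1 - v * t i) := by
  have hden : Tendsto (fun i ↦ (1 - v * t i)⁻¹) cofinite (𝓝 1) := by
    simpa using ((ht.tendsto_cofinite_zero.const_mul v).const_sub 1).inv₀ (by simp)
  have hO : (fun i ↦ t i / (1 - v * t i)) =O[cofinite] t := by
    simpa [div_eq_mul_inv] using (isBigO_refl t cofinite).mul (hden.isBigO_one ℂ)
  exact summable_of_isBigO' ht hO

theorem multipliable_one_sub_mul_div_one_sub_mul {ι : Type*} {t : ι → ℂ} (ht : Summable t)
    (u v : ℂ) : Multipliable fun i ↦ (1 - u * t i) / (1 - v * t i) := by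
  by_cases! h : ∃ i, 1 - v * t i = 0
  · exact multipliable_of_exists_eq_zero (h.imp fun i hi ↦ by rw [hi, div_zero])
  · convert Complex.multipliable_one_add_of_summable
      ((summable_div_one_sub_mul ht v).mul_left (v - u)) using 2 with i
    rw [mul_div_assoc', one_add_div (h i)]
    ring

theorem tprod_ratio_mul_tprod_ratio_comm {ι : Type*} {t : ι → ℂ} (ht : Summable t)
    (a b c d : ℂ) :
    (∏' i, (1 - a * t i) / (1 - c * t i)) * ∏' i, (1 - b * t i) / (1 - d * t i) =
      (∏' i, (1 - b * t i) / (1 - c * t i)) * ∏' i, (1 - a * t i) / (1 - d * t i) := by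
  simp only [← (multipliable_one_sub_mul_div_one_sub_mul ht _ _).tprod_mul
    (multipliable_one_sub_mul_div_one_sub_mul ht _ _), div_mul_div_comm, mul_comm (1 - a * _)]

theorem summable_pow_mul_pow {p q : ℂ} (hp : ‖p‖ < 1) (hq : ‖q‖ < 1) :
    Summable fun x : ℕ × ℕ ↦ p ^ x.1 * q ^ x.2 :=
  summable_mul_of_summable_norm (summable_norm_geometric_of_norm_lt_one hp)
    (summable_norm_geometric_of_norm_lt_one hq)

theorem ellGamma_eq_tprod (p q z : ℂ) :
    ellGamma p q z = ∏' x : ℕ × ℕ,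
      (1 - p * q / z * (p ^ x.1 * q ^ x.2)) / (1 - z * (p ^ x.1 * q ^ x.2)) := by
  unfold ellGamma
  congr! 3 with x <;> ring

theorem ellGamma_quadratic_q_general (p q z : ℂ) (hp : ‖p‖ < 1) (hq : ‖q‖ < 1) :
    ellGamma p q z = ellGamma p (q ^ 2) z * ellGamma p (q ^ 2) (q * z) := by
  set s : ℕ × ℕ → ℂ := fun x ↦ p ^ x.1 * (q ^ 2) ^ x.2
  have hs : Summable s := summable_pow_mul_pow hp <| by
    rw [norm_pow]; exact pow_lt_one₀ (norm_nonneg q) hq two_ne_zero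
  have heven (x : ℕ × ℕ) : p ^ x.1 * q ^ (2 * x.2) = s x := by simp only [s, pow_mul]
  have hodd (x : ℕ × ℕ) : p ^ x.1 * q ^ (2 * x.2 + 1) = q * s x := by simp only [s]; ring
  have hpq : p * q ^ 2 / (q * z) = p * q / z := by
    rcases eq_or_ne q 0 with rfl | hq0
    · simp
    · field_simp
  calc ellGamma p q z
      = (∏' x, (1 - p * q / z * s x) / (1 - z * s x)) *
          ∏' x, (1 - p * q / z * q * s x) / (1 - z * q * s x) := by
        rw [ellGamma_eq_tprod, tprod_even_mul_odd_snd] <;> simp only [heven, hodd, ← mul_assoc]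
        exacts [multipliable_one_sub_mul_div_one_sub_mul hs _ _,
          multipliable_one_sub_mul_div_one_sub_mul hs _ _]
    _ = (∏' x, (1 - p * q / z * q * s x) / (1 - z * s x)) *
          ∏' x, (1 - p * q / z * s x) / (1 - z * q * s x) :=
        tprod_ratio_mul_tprod_ratio_comm hs _ _ _ _
    _ = ellGamma p (q ^ 2) z * ellGamma p (q ^ 2) (q * z) := by
        rw [ellGamma_eq_tprod, ellGamma_eq_tprod, hpq, mul_comm q z, div_mul_eq_mul_div,
          mul_assoc p q q, ← sq]

/-- The quadratic functional equation `Γ_{p,q}(z) = Γ_{p,q²}(z) Γ_{p,q²}(qz)`. -/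
theorem ellGamma_quadratic_q (p q z : ℂ) (hp : ‖p‖ < 1) (hq : ‖q‖ < 1) (hz : z ≠ 0) :
    ellGamma p q z = ellGamma p (q ^ 2) z * ellGamma p (q ^ 2) (q * z) :=
  ellGamma_quadratic_q_general p q z hp hq
end

section
/- For complex numbers p, q, z with |p| < 1, |q| < 1, z ≠ 0, one has Γ_{p²,q²}(z²) = Γ_{p,q}(z) · Γ_{p,q}(−z). -/
/-!
Since `1 - a² = (1 - a)(1 + a)`, each factor of `Γ_{p²,q²}(z²)` is the product of the factors
with the same index `(i, j)` of `Γ_{p,q}(z)` and `Γ_{p,q}(-z)`, so the identity holds as soon as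
both double products converge. They do because `∑ |p|^i |q|^j < ∞`; a vanishing denominator
`1 - p^i q^j z` makes the corresponding factor `0` (division by zero), so the product is `0`.
-/

section NormedField

variable {ι K : Type*} [NormedField K]

theorem multipliable_one_add_div_one_add [CompleteSpace K] {f g : ι → K}
    (hf : Summable fun i ↦ ‖f i‖) (hg : Summable fun i ↦ ‖g i‖) :
    Multipliable fun i ↦ (1 + f i) / (1 + g i) := by
  by_cases hzero : ∃ i, 1 + g i = 0
  · obtain ⟨i, hi⟩ := hzero
    exact multipliable_of_exists_eq_zero ⟨i, by rw [hi, div_zero]⟩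
  · push Not at hzero
    exact (multipliable_one_add_of_summable hf).div₀ (multipliable_one_add_of_summable hg)
      (tprod_one_add_ne_zero_of_summable hzero hg)

theorem summable_norm_pow_mul_pow_mul {p q : K} (hp : ‖p‖ < 1) (hq : ‖q‖ < 1) (c : K) :
    Summable fun ij : ℕ × ℕ ↦ ‖p ^ ij.1 * q ^ ij.2 * c‖ := by
  have hgeom : Summable fun ij : ℕ × ℕ ↦ ‖p‖ ^ ij.1 * ‖q‖ ^ ij.2 :=
    (summable_geometric_of_lt_one (norm_nonneg p) hp).mul_of_nonneg
      (summable_geometric_of_lt_one (norm_nonneg q) hq)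
      (fun i ↦ pow_nonneg (norm_nonneg p) i) (fun j ↦ pow_nonneg (norm_nonneg q) j)
  simpa only [norm_mul, norm_pow] using hgeom.mul_right ‖c‖

end NormedField

theorem multipliable_ellGamma_factor {p q : ℂ} (hp : ‖p‖ < 1) (hq : ‖q‖ < 1) (z : ℂ) :
    Multipliable fun ij : ℕ × ℕ ↦
      (1 - p ^ (ij.1 + 1) * q ^ (ij.2 + 1) / z) / (1 - p ^ ij.1 * q ^ ij.2 * z) := by
  have hnum : Summable fun ij : ℕ × ℕ ↦ ‖-(p ^ (ij.1 + 1) * q ^ (ij.2 + 1) / z)‖ :=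
    (summable_norm_pow_mul_pow_mul hp hq (p * q / z)).congr fun ij ↦ by
      rw [norm_neg]; ring_nf
  have hden : Summable fun ij : ℕ × ℕ ↦ ‖-(p ^ ij.1 * q ^ ij.2 * z)‖ := by
    simpa only [norm_neg] using summable_norm_pow_mul_pow_mul hp hq z
  simpa only [← sub_eq_add_neg] using multipliable_one_add_div_one_add hnum hden

theorem one_sub_sq_div_one_sub_sq {K : Type*} [Field K] (a b : K) :
    (1 - a ^ 2) / (1 - b ^ 2) = (1 - a) / (1 - b) * ((1 - -a) / (1 - -b)) := by
  rw [div_mul_div_comm]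
  ring

theorem ellGamma_quadratic_sq_general (p q z : ℂ) (hp : ‖p‖ < 1) (hq : ‖q‖ < 1) :
    ellGamma (p ^ 2) (q ^ 2) (z ^ 2) = ellGamma p q z * ellGamma p q (-z) := by
  unfold ellGamma
  rw [← (multipliable_ellGamma_factor hp hq z).tprod_mul
    (multipliable_ellGamma_factor hp hq (-z))]
  refine tprod_congr fun ij ↦ ?_
  have hnum : (p ^ 2) ^ (ij.1 + 1) * (q ^ 2) ^ (ij.2 + 1) / z ^ 2 =
      (p ^ (ij.1 + 1) * q ^ (ij.2 + 1) / z) ^ 2 := by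
    rw [div_pow, mul_pow]; ring
  have hden : (p ^ 2) ^ ij.1 * (q ^ 2) ^ ij.2 * z ^ 2 = (p ^ ij.1 * q ^ ij.2 * z) ^ 2 := by
    ring
  rw [hnum, hden, one_sub_sq_div_one_sub_sq, div_neg, mul_neg]

/-- The quadratic functional equation `Γ_{p²,q²}(z²) = Γ_{p,q}(z) Γ_{p,q}(−z)`. -/
theorem ellGamma_quadratic_sq (p q z : ℂ) (hp : ‖p‖ < 1) (hq : ‖q‖ < 1) (hz : z ≠ 0) :
    ellGamma (p ^ 2) (q ^ 2) (z ^ 2) = ellGamma p q z * ellGamma p q (-z) :=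
  ellGamma_quadratic_sq_general p q z hp hq
end

section
/- For |p| < 1 and |q| < 1, the limit lim_{x → 1} (1 − x)·Γ_{p,q}(x) equals 1/((p;p)_∞ (q;q)_∞), where (a;b)_∞ = ∏_{k ≥ 0}(1 − a b^k). -/
open Filter Topology

/-- The infinite q-Pochhammer symbol `(a;b)_∞ = ∏_{k ≥ 0} (1 - a b^k)`. -/
noncomputable def qPoch (a b : ℂ) : ℂ := ∏' k : ℕ, (1 - a * b ^ k)

/-!
Split `Γ_{p,q}(x) = N(x) / D(x)` into the products of numerators and of denominators. The
`(0,0)` factor of `D` is `1 - x`, and the product `D'` of the remaining factors, like `N`, is a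
product `∏ (1 - a_k y)` with `∑ ‖a_k‖ < ∞`, hence continuous in `y` by locally uniform convergence
and nonzero at `y = 1`. So `(1 - x) Γ_{p,q}(x) = N(x) / D'(x) → N(1) / D'(1)`. Splitting the
indices `(i,j) ≠ (0,0)` into `i, j ≥ 1`, `j = 0` and `i = 0`, `D'(1)` is `N(1) (p;p)_∞ (q;q)_∞`.
-/

section ProductsOfOneSubMul

variable {ι 𝕜 : Type*} [NormedField 𝕜] {a : ι → 𝕜}

theorem multipliable_one_sub_mul [CompleteSpace 𝕜] (ha : Summable (‖a ·‖)) (x : 𝕜) :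
    Multipliable fun i => 1 - a i * x := by
  simp_rw [sub_eq_add_neg]
  exact multipliable_one_add_of_summable <| (ha.mul_right ‖x‖).congr fun i => by simp

theorem tprod_one_sub_ne_zero [CompleteSpace 𝕜] (ha : Summable (‖a ·‖)) (h : ∀ i, a i ≠ 1) :
    ∏' i, (1 - a i) ≠ 0 := by
  have hne : ∀ i, 1 + -a i ≠ 0 := fun i => by
    rw [← sub_eq_add_neg, sub_ne_zero]; exact (h i).symm
  simp_rw [sub_eq_add_neg]
  exact tprod_one_add_ne_zero_of_summable hne (by simpa using ha)

theorem continuous_tprod_one_sub_mul [ProperSpace 𝕜] (ha : Summable (‖a ·‖)) :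
    Continuous fun x => ∏' i, (1 - a i * x) := by
  refine continuous_iff_continuousAt.2 fun x₀ => ?_
  have hbound : ∀ i, ∀ x ∈ Metric.closedBall x₀ 1, ‖-(a i * x)‖ ≤ ‖a i‖ * (‖x₀‖ + 1) := by
    intro i x hx
    rw [norm_neg, norm_mul]
    gcongr
    have := mem_closedBall_iff_norm.1 hx
    linarith [norm_le_norm_add_norm_sub' x x₀]
  have hunif := (ha.mul_right _).hasProdUniformlyOn_one_add (isCompact_closedBall x₀ 1)
    (.of_forall hbound) fun i => by fun_prop
  rw [hasProdUniformlyOn_iff_tendstoUniformlyOn] at hunif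
  simp_rw [← sub_eq_add_neg] at hunif
  exact (hunif.continuousOn (.of_forall fun s => by fun_prop)).continuousAt
    (Metric.closedBall_mem_nhds x₀ one_pos)

end ProductsOfOneSubMul

def natProdSplitEquiv : Unit ⊕ (ℕ × ℕ) ⊕ ℕ ⊕ ℕ ≃ ℕ × ℕ where
  toFun
    | .inl () => (0, 0)
    | .inr (.inl (i, j)) => (i + 1, j + 1)
    | .inr (.inr (.inl i)) => (i + 1, 0)
    | .inr (.inr (.inr j)) => (0, j + 1)
  invFun
    | (0, 0) => .inl ()
    | (i + 1, j + 1) => .inr (.inl (i, j))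
    | (i + 1, 0) => .inr (.inr (.inl i))
    | (0, j + 1) => .inr (.inr (.inr j))
  left_inv := by rintro (⟨⟩ | ⟨i, j⟩ | i | j) <;> rfl
  right_inv := by rintro ⟨_ | i, _ | j⟩ <;> rfl

section EllipticGamma

variable {p q : ℂ}

def bimonomial (p q : ℂ) (ij : ℕ × ℕ) : ℂ := p ^ ij.1 * q ^ ij.2

theorem summable_norm_bimonomial (hp : ‖p‖ < 1) (hq : ‖q‖ < 1) :
    Summable (‖bimonomial p q ·‖) := by
  simp only [bimonomial, norm_mul, norm_pow]
  exact (summable_geometric_of_lt_one (norm_nonneg p) hp).mul_of_nonneg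
    (summable_geometric_of_lt_one (norm_nonneg q) hq) (fun _ => by positivity)
    (fun _ => by positivity)

theorem bimonomial_ne_one (hp : ‖p‖ < 1) (hq : ‖q‖ < 1) {ij : ℕ × ℕ} (h : ij ≠ 0) :
    bimonomial p q ij ≠ 1 := by
  refine ne_of_apply_ne norm (ne_of_lt ?_)
  obtain ⟨i, j⟩ := ij
  simp only [bimonomial, norm_mul, norm_pow, norm_one]
  rcases Nat.eq_zero_or_pos i with rfl | hi
  · have hj : j ≠ 0 := by rintro rfl; exact h rfl
    simpa using pow_lt_one₀ (norm_nonneg q) hq hj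
  · exact mul_lt_one_of_nonneg_of_lt_one_left (by positivity)
      (pow_lt_one₀ (norm_nonneg p) hp hi.ne') (pow_le_one₀ (norm_nonneg q) hq.le)

theorem summable_norm_bimonomial_comp (hp : ‖p‖ < 1) (hq : ‖q‖ < 1) {κ : Type*}
    {f : κ → ℕ × ℕ} (hf : f.Injective) : Summable fun k => ‖bimonomial p q (f k)‖ :=
  (summable_norm_bimonomial hp hq).comp_injective hf

theorem injective_prod_add_one : Function.Injective fun ij : ℕ × ℕ => (ij.1 + 1, ij.2 + 1) := by
  intro a b h; simpa [Prod.ext_iff] using h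

noncomputable def ellGammaNumerator (p q x : ℂ) : ℂ :=
  ∏' ij : ℕ × ℕ, (1 - bimonomial p q (ij.1 + 1, ij.2 + 1) * x⁻¹)

noncomputable def ellGammaReducedDenominator (p q x : ℂ) : ℂ :=
  ∏' k : (ℕ × ℕ) ⊕ ℕ ⊕ ℕ, (1 - bimonomial p q (natProdSplitEquiv (.inr k)) * x)

theorem hasProd_one_sub_bimonomial_mul (hp : ‖p‖ < 1) (hq : ‖q‖ < 1) (x : ℂ) :
    HasProd (fun ij => 1 - bimonomial p q ij * x) ((1 - x) * ellGammaReducedDenominator p q x) := by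
  rw [← natProdSplitEquiv.hasProd_iff]
  refine HasProd.sum ?_ (multipliable_one_sub_mul ?_ x).hasProd
  · convert hasProd_unique (fun _ : Unit => 1 - x) with u
    simp [bimonomial, natProdSplitEquiv]
  · exact summable_norm_bimonomial_comp hp hq (natProdSplitEquiv.injective.comp Sum.inr_injective)

theorem ellGammaReducedDenominator_one (hp : ‖p‖ < 1) (hq : ‖q‖ < 1) :
    ellGammaReducedDenominator p q 1 = ellGammaNumerator p q 1 * (qPoch p p * qPoch q q) := by
  have hmul {κ : Type} {f : κ → ℕ × ℕ} (hf : f.Injective) :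
      Multipliable fun k => 1 - bimonomial p q (f k) * 1 :=
    multipliable_one_sub_mul (summable_norm_bimonomial_comp hp hq hf) 1
  rw [ellGammaReducedDenominator, Multipliable.tprod_sum, Multipliable.tprod_sum]
  · simp [ellGammaNumerator, qPoch, bimonomial, natProdSplitEquiv, pow_succ']
  all_goals exact hmul (natProdSplitEquiv.injective.comp fun a b h => by simpa using h)

theorem ellGamma_eq_div (hp : ‖p‖ < 1) (hq : ‖q‖ < 1) {x : ℂ}
    (hx : (1 - x) * ellGammaReducedDenominator p q x ≠ 0) :
    ellGamma p q x = ellGammaNumerator p q x / ((1 - x) * ellGammaReducedDenominator p q x) := by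
  have hnum : HasProd (fun ij : ℕ × ℕ => 1 - p ^ (ij.1 + 1) * q ^ (ij.2 + 1) / x)
      (ellGammaNumerator p q x) := by
    simp_rw [div_eq_mul_inv]
    exact (multipliable_one_sub_mul
      (summable_norm_bimonomial_comp hp hq injective_prod_add_one) x⁻¹).hasProd
  exact (hnum.div₀ (hasProd_one_sub_bimonomial_mul hp hq x) hx).tprod_eq

theorem continuousAt_ellGammaNumerator (hp : ‖p‖ < 1) (hq : ‖q‖ < 1) {x : ℂ} (hx : x ≠ 0) :
    ContinuousAt (ellGammaNumerator p q) x := by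
  have hcont := continuous_tprod_one_sub_mul
    (summable_norm_bimonomial_comp hp hq injective_prod_add_one)
  exact hcont.continuousAt.comp (continuousAt_inv₀ hx)

theorem continuous_ellGammaReducedDenominator (hp : ‖p‖ < 1) (hq : ‖q‖ < 1) :
    Continuous (ellGammaReducedDenominator p q) :=
  continuous_tprod_one_sub_mul <| summable_norm_bimonomial_comp hp hq <|
    natProdSplitEquiv.injective.comp Sum.inr_injective

theorem ellGammaNumerator_one_ne_zero (hp : ‖p‖ < 1) (hq : ‖q‖ < 1) :
    ellGammaNumerator p q 1 ≠ 0 := by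
  rw [ellGammaNumerator]
  simp only [inv_one, mul_one]
  exact tprod_one_sub_ne_zero (summable_norm_bimonomial_comp hp hq injective_prod_add_one)
    fun ij => bimonomial_ne_one hp hq (by simp)

theorem ellGammaReducedDenominator_one_ne_zero (hp : ‖p‖ < 1) (hq : ‖q‖ < 1) :
    ellGammaReducedDenominator p q 1 ≠ 0 := by
  rw [ellGammaReducedDenominator]
  simp only [mul_one]
  exact tprod_one_sub_ne_zero (summable_norm_bimonomial_comp hp hq
    (natProdSplitEquiv.injective.comp Sum.inr_injective))
    fun k => bimonomial_ne_one hp hq <|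
      show natProdSplitEquiv (.inr k) ≠ natProdSplitEquiv (.inl ()) from
        natProdSplitEquiv.injective.ne Sum.inr_ne_inl

end EllipticGamma

/-- `lim_{x → 1} (1 − x) Γ_{p,q}(x) = 1/((p;p)_∞ (q;q)_∞)`. -/
theorem ellGamma_residue_at_one (p q : ℂ) (hp : ‖p‖ < 1) (hq : ‖q‖ < 1) :
    Tendsto (fun x : ℂ => (1 - x) * ellGamma p q x) (𝓝[≠] 1)
      (𝓝 (1 / (qPoch p p * qPoch q q))) := by
  have hD := (continuous_ellGammaReducedDenominator hp hq).continuousAt (x := 1)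
  have hD1 := ellGammaReducedDenominator_one_ne_zero hp hq
  have hlim := (continuousAt_ellGammaNumerator hp hq one_ne_zero).tendsto.div hD.tendsto hD1
  rw [ellGammaReducedDenominator_one hp hq,
    div_mul_cancel_left₀ (ellGammaNumerator_one_ne_zero hp hq), ← one_div] at hlim
  refine (hlim.mono_left nhdsWithin_le_nhds).congr' ?_
  filter_upwards [nhdsWithin_le_nhds (hD.eventually_ne hD1), self_mem_nhdsWithin] with x hx hx1
  have h1x : 1 - x ≠ 0 := sub_ne_zero.2 (Ne.symm hx1)
  rw [Pi.div_apply, ellGamma_eq_div hp hq (mul_ne_zero h1x hx), ← mul_div_assoc,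
    mul_div_mul_left _ _ h1x]
end

section
/- For |p| < 1 and |q| < 1, the special value Γ_{p,q}(−1) = (p;p²)_∞ (q;q²)_∞ / 2 holds, where (a;b)_∞ = ∏_{k≥0}(1 − a b^k). -/
/-!
At `z = -1` the factors become `(1 + p^{i+1} q^{j+1}) / (1 + p^i q^j)`, so `Γ_{p,q}(-1)` is the
quotient of two absolutely convergent double products. Peeling the row `j = 0` and the column
`i = 0` off the denominator leaves exactly the numerator, hence
`Γ_{p,q}(-1) = 1 / (2 ∏_{n≥1} (1 + pⁿ) ∏_{n≥1} (1 + qⁿ))`. Euler's identity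
`∏_{n≥1} (1 + zⁿ) = 1 / (z;z²)_∞` (from `(1 + zⁿ)(1 - zⁿ) = 1 - z²ⁿ` and splitting
`∏ (1 - zⁿ)` into odd and even `n`) finishes the computation.
-/

section OneAddProducts

variable {R : Type*} [NormedCommRing R] [NormOneClass R] [CompleteSpace R]

theorem tprod_one_add_ne_zero_of_norm_lt_one [NormMulClass R] {ι : Type*} {f : ι → R}
    (hf : Summable fun i => ‖f i‖) (hlt : ∀ i, ‖f i‖ < 1) : ∏' i, (1 + f i) ≠ 0 := by
  refine tprod_one_add_ne_zero_of_summable (fun i h => (hlt i).ne ?_) hf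
  rw [eq_neg_of_add_eq_zero_right h, norm_neg, norm_one]

-- Multipliability does not pass to subfamilies in a ring, so the subproducts below are
-- controlled through the summability of `‖f‖` instead.
variable {f : ℕ × ℕ → R}

theorem tprod_one_add_prod_nat_eq_mul_succ_snd (hf : Summable fun ij => ‖f ij‖) :
    ∏' ij, (1 + f ij) =
      (∏' i, (1 + f (i, 0))) * ∏' ij : ℕ × ℕ, (1 + f (ij.1, ij.2 + 1)) := by
  have hrow : ∀ i, Summable fun j => ‖f (i, j)‖ := fun i =>
    hf.comp_injective (Prod.mk_right_injective i)
  have htail : Summable fun ij : ℕ × ℕ => ‖f (ij.1, ij.2 + 1)‖ :=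
    hf.comp_injective (Prod.map_injective.2 ⟨Function.injective_id, add_left_injective 1⟩)
  have htailRow : ∀ i, Multipliable fun j => 1 + f (i, j + 1) := fun i =>
    multipliable_one_add_of_summable ((hrow i).comp_injective (add_left_injective 1))
  calc ∏' ij, (1 + f ij)
      = ∏' i, ∏' j, (1 + f (i, j)) :=
        (multipliable_one_add_of_summable hf).tprod_prod' fun i =>
          multipliable_one_add_of_summable (hrow i)
    _ = ∏' i, ((1 + f (i, 0)) * ∏' j, (1 + f (i, j + 1))) :=
        tprod_congr fun i => tprod_eq_zero_mul' (htailRow i)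
    _ = (∏' i, (1 + f (i, 0))) * ∏' i, ∏' j, (1 + f (i, j + 1)) :=
        Multipliable.tprod_mul
          (multipliable_one_add_of_summable (hf.comp_injective (Prod.mk_left_injective 0)))
          ((multipliable_one_add_of_summable htail).hasProd.prod_fiberwise
            fun i => (htailRow i).hasProd).multipliable
    _ = _ := congrArg _ ((multipliable_one_add_of_summable htail).tprod_prod' htailRow).symm

theorem tprod_one_add_prod_nat_eq_mul_succ_fst (hf : Summable fun ij => ‖f ij‖) :
    ∏' ij, (1 + f ij) =
      (∏' j, (1 + f (0, j))) * ∏' ij : ℕ × ℕ, (1 + f (ij.1 + 1, ij.2)) := by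
  have hswap := tprod_one_add_prod_nat_eq_mul_succ_snd (f := f ∘ Prod.swap)
    (hf.comp_injective Prod.swap_injective)
  simp only [Function.comp_apply, Prod.swap_prod_mk] at hswap
  rw [← (Equiv.prodComm ℕ ℕ).tprod_eq,
    ← (Equiv.prodComm ℕ ℕ).tprod_eq (fun ij => 1 + f (ij.1 + 1, ij.2))]
  exact hswap

end OneAddProducts

section Euler

variable {z : ℂ}

theorem norm_pow_lt_one (hz : ‖z‖ < 1) {n : ℕ} (hn : n ≠ 0) : ‖z ^ n‖ < 1 := by
  rw [norm_pow]
  exact pow_lt_one₀ (norm_nonneg z) hz hn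

theorem multipliable_one_add_pow_succ (hz : ‖z‖ < 1) :
    Multipliable fun n : ℕ => 1 + z ^ (n + 1) :=
  Complex.multipliable_one_add_of_summable (f := fun n => z ^ (n + 1))
    ((summable_geometric_of_norm_lt_one hz).comp_injective (add_left_injective 1))

theorem tprod_one_add_pow_succ_ne_zero (hz : ‖z‖ < 1) :
    ∏' n : ℕ, (1 + z ^ (n + 1)) ≠ 0 :=
  tprod_one_add_ne_zero_of_norm_lt_one
    ((summable_norm_geometric_of_norm_lt_one hz).comp_injective (add_left_injective 1))
    fun n => norm_pow_lt_one hz n.succ_ne_zero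

theorem multipliable_one_sub_pow_comp (hz : ‖z‖ < 1) {g : ℕ → ℕ} (hg : g.Injective) :
    Multipliable fun n => 1 - z ^ g n := by
  simpa only [sub_eq_add_neg] using Complex.multipliable_one_add_of_summable
    (f := fun n => -z ^ g n) ((summable_geometric_of_norm_lt_one hz).comp_injective hg).neg

theorem qPoch_sq_eq_inv_tprod_one_add (hz : ‖z‖ < 1) :
    qPoch z (z ^ 2) = (∏' n : ℕ, (1 + z ^ (n + 1)))⁻¹ := by
  have hodd : qPoch z (z ^ 2) = ∏' k : ℕ, (1 - z ^ (2 * k + 1)) :=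
    tprod_congr fun k => by ring
  have heven : ∏' k : ℕ, (1 - z ^ (2 * k + 2)) ≠ 0 := by
    have hs : Summable fun k : ℕ => ‖-z ^ (2 * k + 2)‖ := by
      simp only [norm_neg]
      exact (summable_norm_geometric_of_norm_lt_one hz).comp_injective
        (i := fun k => 2 * k + 2) fun a b h => by simpa using h
    simpa only [sub_eq_add_neg] using tprod_one_add_ne_zero_of_norm_lt_one hs
      fun k => by simpa only [norm_neg] using norm_pow_lt_one hz (by omega)
  have hsq : (∏' n : ℕ, (1 + z ^ (n + 1))) * ∏' n : ℕ, (1 - z ^ (n + 1)) =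
      ∏' k : ℕ, (1 - z ^ (2 * k + 2)) := by
    rw [← (multipliable_one_add_pow_succ hz).tprod_mul
      (multipliable_one_sub_pow_comp hz (add_left_injective 1))]
    exact tprod_congr fun n => by ring
  have hparity : ∏' n : ℕ, (1 - z ^ (n + 1)) =
      (∏' k : ℕ, (1 - z ^ (2 * k + 1))) * ∏' k : ℕ, (1 - z ^ (2 * k + 2)) :=
    (tprod_even_mul_odd (f := fun n => 1 - z ^ (n + 1))
      (multipliable_one_sub_pow_comp hz fun a b h => by simpa using h)
      (multipliable_one_sub_pow_comp hz fun a b h => by simpa using h)).symm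
  rw [hparity, ← mul_assoc] at hsq
  rw [hodd, inv_eq_of_mul_eq_one_right (mul_right_cancel₀ heven (hsq.trans (one_mul _).symm))]

end Euler

section EllGamma

variable {p q : ℂ}

theorem summable_norm_pow_mul_pow (hp : ‖p‖ < 1) (hq : ‖q‖ < 1) :
    Summable fun ij : ℕ × ℕ => ‖p ^ ij.1 * q ^ ij.2‖ :=
  (summable_norm_geometric_of_norm_lt_one hp).mul_norm (summable_norm_geometric_of_norm_lt_one hq)

theorem tprod_one_add_pow_mul_pow (hp : ‖p‖ < 1) (hq : ‖q‖ < 1) :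
    ∏' ij : ℕ × ℕ, (1 + p ^ ij.1 * q ^ ij.2) =
      2 * (∏' n : ℕ, (1 + p ^ (n + 1))) * (∏' n : ℕ, (1 + q ^ (n + 1))) *
        ∏' ij : ℕ × ℕ, (1 + p ^ (ij.1 + 1) * q ^ (ij.2 + 1)) := by
  have hD := summable_norm_pow_mul_pow hp hq
  have hD' : Summable fun ij : ℕ × ℕ => ‖p ^ ij.1 * q ^ (ij.2 + 1)‖ :=
    hD.comp_injective (i := Prod.map id (· + 1))
      (Prod.map_injective.2 ⟨Function.injective_id, add_left_injective 1⟩)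
  rw [tprod_one_add_prod_nat_eq_mul_succ_snd hD]
  simp only [pow_zero, mul_one]
  rw [tprod_one_add_prod_nat_eq_mul_succ_fst hD']
  simp only [pow_zero, one_mul]
  rw [tprod_eq_zero_mul' (f := fun n => 1 + p ^ n) (multipliable_one_add_pow_succ hp)]
  ring

theorem ellGamma_neg_one_eq_inv (hp : ‖p‖ < 1) (hq : ‖q‖ < 1) :
    ellGamma p q (-1) = (2 * (∏' n : ℕ, (1 + p ^ (n + 1))) * ∏' n : ℕ, (1 + q ^ (n + 1)))⁻¹ := by
  have hD := summable_norm_pow_mul_pow hp hq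
  have hN : Summable fun ij : ℕ × ℕ => ‖p ^ (ij.1 + 1) * q ^ (ij.2 + 1)‖ :=
    hD.comp_injective (i := Prod.map (· + 1) (· + 1))
      (Prod.map_injective.2 ⟨add_left_injective 1, add_left_injective 1⟩)
  have hN0 : ∏' ij : ℕ × ℕ, (1 + p ^ (ij.1 + 1) * q ^ (ij.2 + 1)) ≠ 0 :=
    tprod_one_add_ne_zero_of_norm_lt_one hN fun ij => by
      rw [norm_mul]
      exact mul_lt_one_of_nonneg_of_lt_one_left (norm_nonneg _)
        (norm_pow_lt_one hp ij.1.succ_ne_zero) (norm_pow_lt_one hq ij.2.succ_ne_zero).le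
  have hD0 : ∏' ij : ℕ × ℕ, (1 + p ^ ij.1 * q ^ ij.2) ≠ 0 := by
    rw [tprod_one_add_pow_mul_pow hp hq]
    exact mul_ne_zero (mul_ne_zero (mul_ne_zero two_ne_zero (tprod_one_add_pow_succ_ne_zero hp))
      (tprod_one_add_pow_succ_ne_zero hq)) hN0
  calc ellGamma p q (-1)
      = ∏' ij : ℕ × ℕ, (1 + p ^ (ij.1 + 1) * q ^ (ij.2 + 1)) / (1 + p ^ ij.1 * q ^ ij.2) :=
        tprod_congr fun ij => by ring
    _ = (∏' ij : ℕ × ℕ, (1 + p ^ (ij.1 + 1) * q ^ (ij.2 + 1))) /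
          ∏' ij : ℕ × ℕ, (1 + p ^ ij.1 * q ^ ij.2) :=
        (multipliable_one_add_of_summable hN).tprod_div₀
          (multipliable_one_add_of_summable hD) hD0
    _ = _ := by rw [tprod_one_add_pow_mul_pow hp hq, div_mul_cancel_right₀ hN0]

end EllGamma

/-- The special value `Γ_{p,q}(−1) = (p;p²)_∞ (q;q²)_∞ / 2`. -/
theorem ellGamma_neg_one (p q : ℂ) (hp : ‖p‖ < 1) (hq : ‖q‖ < 1) :
    ellGamma p q (-1) = qPoch p (p ^ 2) * qPoch q (q ^ 2) / 2 := by
  rw [ellGamma_neg_one_eq_inv hp hq, qPoch_sq_eq_inv_tprod_one_add hp,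
    qPoch_sq_eq_inv_tprod_one_add hq]
  ring
end

section
/- Let m ≥ 2 and consider the involutions of (ℂ*)^{m+1} (with coordinates (c, u, v_1, …, v_{m−1})): s_D : (c,u,v) ↦ (1/c, uc, v); s_Γ : (c,u,v) ↦ (cu, 1/u, v_1, v_2 u, v_3, …, v_{m−1}); s_1 : (c,u,v) ↦ (c, u, 1/v_1, v_1 v_2, v_3, …); s_2 : (c,u,v) ↦ (c, u v_2, v_1 v_2, 1/v_2, v_2 v_3, v_4, …); and for 3 ≤ k ≤ m−1, s_k multiplies adjacent coordinates: (…, v_{k−1} v_k, 1/v_k, v_k v_{k+1}, …). Under the identification of these monomial automorphisms with elements of GL_{m+1}(ℤ), the matrices corresponding to s_D, s_Γ, s_1, …, s_{m−1} are precisely the simple reflections of the standard reflection representation of the Coxeter group of type E_{m+1} (interpreting E_3 = A_1 × A_2, E_4 = A_4, E_5 = D_5). -/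
/- Coordinates on `(ℂ*)^{m+1}`: index `0` is `c`, index `1` is `u`, and index
`k+1` is `v_k` for `1 ≤ k ≤ m−1`. -/

/-- The involution `s_D : (c,u,v) ↦ (1/c, uc, v)`. -/
noncomputable def sD (m : ℕ) (x : Fin (m + 1) → ℂˣ) : Fin (m + 1) → ℂˣ := fun j =>
  if (j : ℕ) = 0 then (x j)⁻¹
  else if (j : ℕ) = 1 then x j * x ⟨0, Nat.succ_pos m⟩
  else x j

/-- The involution `s_Γ : (c,u,v) ↦ (cu, 1/u, v_1, v_2 u, v_3, …)`. -/
noncomputable def sG (m : ℕ) (x : Fin (m + 1) → ℂˣ) : Fin (m + 1) → ℂˣ := fun j =>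
  if h1 : 1 < m + 1 then
    (if (j : ℕ) = 0 then x j * x ⟨1, h1⟩
     else if (j : ℕ) = 1 then (x j)⁻¹
     else if (j : ℕ) = 3 then x j * x ⟨1, h1⟩
     else x j)
  else x j

/-- The involutions `s_k`, `1 ≤ k ≤ m−1`: `v_k ↦ 1/v_k`, the neighbours
`v_{k−1}` (for `k ≥ 2`) and `v_{k+1}` are multiplied by `v_k`, and for the
branch node `k = 2` also `u ↦ u v_2`.  (For `k = 1`: `v_1 ↦ 1/v_1`,
`v_2 ↦ v_1 v_2`.) -/
noncomputable def sK (m k : ℕ) (x : Fin (m + 1) → ℂˣ) : Fin (m + 1) → ℂˣ := fun j =>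
  if hk : k + 1 < m + 1 then
    (if (j : ℕ) = k + 1 then (x j)⁻¹
     else if (j : ℕ) = k + 2 ∨ ((j : ℕ) = k ∧ 2 ≤ k) ∨ ((j : ℕ) = 1 ∧ k = 2) then
       x j * x ⟨k + 1, hk⟩
     else x j)
  else x j

set_option linter.unnecessarySeqFocus false in
set_option maxHeartbeats 4000000 in
/-- The monomial involutions `s_D, s_Γ, s_1, …, s_{m−1}` of `(ℂ*)^{m+1}` satisfy
exactly the Coxeter relations of type `E_{m+1}` (T-shaped diagram: the chain
`s_1 − s_2 − ⋯ − s_{m−1}` with `s_Γ` attached to the branch node `s_2` and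
`s_D` attached to `s_Γ`; for `m = 2` this is `E_3 = A_1 × A_2`): each generator
is an involution, the pairs `(s_D, s_Γ)`, `(s_Γ, s_2)`, `(s_k, s_{k+1})`
satisfy the order-3 braid relations, and all other pairs commute. -/

theorem monomial_reflections_E (m : ℕ) (hm : 2 ≤ m) :
    (sD m ∘ sD m = id) ∧ (sG m ∘ sG m = id) ∧
    (∀ k, 1 ≤ k → k ≤ m - 1 → sK m k ∘ sK m k = id) ∧
    (sD m ∘ sG m ∘ sD m = sG m ∘ sD m ∘ sG m) ∧
    (2 ≤ m - 1 → sG m ∘ sK m 2 ∘ sG m = sK m 2 ∘ sG m ∘ sK m 2) ∧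
    (∀ k, 1 ≤ k → k + 1 ≤ m - 1 →
      sK m k ∘ sK m (k + 1) ∘ sK m k = sK m (k + 1) ∘ sK m k ∘ sK m (k + 1)) ∧
    (∀ k, 1 ≤ k → k ≤ m - 1 → sD m ∘ sK m k = sK m k ∘ sD m) ∧
    (∀ k, 1 ≤ k → k ≤ m - 1 → k ≠ 2 → sG m ∘ sK m k = sK m k ∘ sG m) ∧
    (∀ k l, 1 ≤ k → k ≤ m - 1 → 1 ≤ l → l ≤ m - 1 → k + 2 ≤ l →
      sK m k ∘ sK m l = sK m l ∘ sK m k) := by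
  have h01 : 1 < m + 1 := by omega
  refine ⟨?_, ?_, ?_, ?_, ?_, ?_, ?_, ?_, ?_⟩
  · funext x j
    obtain ⟨jv, hj⟩ := j
    simp only [sD, Function.comp, id, Fin.val_mk]
    split_ifs <;> first | omega | (try subst jv) <;>
      simp [mul_comm, mul_left_comm, mul_assoc, mul_inv_rev]
  · funext x j
    obtain ⟨jv, hj⟩ := j
    simp only [sG, Function.comp, id, Fin.val_mk]
    simp [h01]
    try split_ifs <;> first | omega | (try subst jv) <;>
      simp [mul_comm, mul_left_comm, mul_assoc, mul_inv_rev]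
  · intro k hk1 hk2
    funext x j
    obtain ⟨jv, hj⟩ := j
    have h1 : k + 1 < m + 1 := by omega
    rcases eq_or_ne k 1 with rfl | hne1
    · simp only [sK, Function.comp, id, Fin.val_mk]
      simp [h1]
      try split_ifs <;> first | omega | (try subst jv) <;>
        simp [mul_comm, mul_left_comm, mul_assoc, mul_inv_rev]
    rcases eq_or_ne k 2 with rfl | hne2
    · simp only [sK, Function.comp, id, Fin.val_mk]
      simp [h1]
      try split_ifs <;> first | omega | (try subst jv) <;>
        simp [mul_comm, mul_left_comm, mul_assoc, mul_inv_rev]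
    · have h3 : 2 ≤ k := by omega
      simp only [sK, Function.comp, id, Fin.val_mk]
      simp [h1, h3, hne1, hne2]
      try split_ifs <;> first | omega | (try subst jv) <;>
        simp [mul_comm, mul_left_comm, mul_assoc, mul_inv_rev]
  · funext x j
    obtain ⟨jv, hj⟩ := j
    simp only [sD, sG, Function.comp, Fin.val_mk]
    simp [h01]
    try split_ifs <;> first | omega | (try subst jv) <;>
      simp [mul_comm, mul_left_comm, mul_assoc, mul_inv_rev]
  · intro hm3
    funext x j
    obtain ⟨jv, hj⟩ := j
    have h1 : 2 + 1 < m + 1 := by omega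
    simp only [sG, sK, Function.comp, Fin.val_mk]
    simp [h01, h1]
    try split_ifs <;> first | omega | (try subst jv) <;>
      simp [mul_comm, mul_left_comm, mul_assoc, mul_inv_rev]
  · intro k hk1 hk2
    funext x j
    obtain ⟨jv, hj⟩ := j
    have h1 : k + 1 < m + 1 := by omega
    have h2 : k + 1 + 1 < m + 1 := by omega
    rcases eq_or_ne k 1 with rfl | hne1
    · simp only [sK, Function.comp, Fin.val_mk]
      simp [h1, h2]
      try split_ifs <;> first | omega | (try subst jv) <;>
        simp [mul_comm, mul_left_comm, mul_assoc, mul_inv_rev]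
    rcases eq_or_ne k 2 with rfl | hne2
    · simp only [sK, Function.comp, Fin.val_mk]
      simp [h1, h2]
      try split_ifs <;> first | omega | (try subst jv) <;>
        simp [mul_comm, mul_left_comm, mul_assoc, mul_inv_rev]
    · have h3 : 2 ≤ k := by omega
      simp only [sK, Function.comp, Fin.val_mk]
      simp [h1, h2, h3, hne1, hne2]
      try split_ifs <;> first | omega | (try subst jv) <;>
        simp [mul_comm, mul_left_comm, mul_assoc, mul_inv_rev]
  · intro k hk1 hk2
    funext x j
    obtain ⟨jv, hj⟩ := j
    have h1 : k + 1 < m + 1 := by omega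
    have h4 : k ≠ 0 := by omega
    rcases eq_or_ne k 1 with rfl | hne1
    · simp only [sD, sK, Function.comp, Fin.val_mk]
      simp [h1]
      try split_ifs <;> first | omega | (try subst jv) <;>
        simp [mul_comm, mul_left_comm, mul_assoc, mul_inv_rev]
    rcases eq_or_ne k 2 with rfl | hne2
    · simp only [sD, sK, Function.comp, Fin.val_mk]
      simp [h1]
      try split_ifs <;> first | omega | (try subst jv) <;>
        simp [mul_comm, mul_left_comm, mul_assoc, mul_inv_rev]
    · have h3 : 2 ≤ k := by omega
      simp only [sD, sK, Function.comp, Fin.val_mk]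
      simp [h1, h3, h4, hne1, hne2]
      try split_ifs <;> first | omega | (try subst jv) <;>
        simp [mul_comm, mul_left_comm, mul_assoc, mul_inv_rev]
  · intro k hk1 hk2 hne2
    funext x j
    obtain ⟨jv, hj⟩ := j
    have h1 : k + 1 < m + 1 := by omega
    have h4 : k ≠ 0 := by omega
    rcases eq_or_ne k 1 with rfl | hne1
    · simp only [sG, sK, Function.comp, Fin.val_mk]
      simp [h01, h1]
      try split_ifs <;> first | omega | (try subst jv) <;>
        simp [mul_comm, mul_left_comm, mul_assoc, mul_inv_rev]
    · have h3 : 2 ≤ k := by omega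
      simp only [sG, sK, Function.comp, Fin.val_mk]
      simp [h01, h1, h3, h4, hne1, hne2]
      try split_ifs <;> first | omega | (try subst jv) <;>
        simp [mul_comm, mul_left_comm, mul_assoc, mul_inv_rev]
  · intro k l hk1 hk2 hl1 hl2 hkl
    funext x j
    obtain ⟨jv, hj⟩ := j
    have h1 : k + 1 < m + 1 := by omega
    have h2 : l + 1 < m + 1 := by omega
    have hl3 : 3 ≤ l := by omega
    have hlne1 : l ≠ 1 := by omega
    have hlne2 : l ≠ 2 := by omega
    have hl2' : 2 ≤ l := by omega
    rcases eq_or_ne k 1 with rfl | hne1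
    · simp only [sK, Function.comp, Fin.val_mk]
      simp [h1, h2, hlne1, hlne2, hl2']
      try split_ifs <;> first | omega | (try subst jv) <;>
        simp [mul_comm, mul_left_comm, mul_assoc, mul_inv_rev]
    rcases eq_or_ne k 2 with rfl | hne2
    · simp only [sK, Function.comp, Fin.val_mk]
      simp [h1, h2, hlne1, hlne2, hl2']
      try split_ifs <;> first | omega | (try subst jv) <;>
        simp [mul_comm, mul_left_comm, mul_assoc, mul_inv_rev]
    · have h3 : 2 ≤ k := by omega
      simp only [sK, Function.comp, Fin.val_mk]
      simp [h1, h2, h3, hne1, hne2, hlne1, hlne2, hl2']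
      try split_ifs <;> first | omega | (try subst jv) <;>
        simp [mul_comm, mul_left_comm, mul_assoc, mul_inv_rev]
end

section
/- For |a| < 1, |q| < 1, and variables z_1,…,z_n, the identity (a;q)_∞^n ∏_{1≤i<j≤n}(a z_i z_j;q)_∞(a z_i/z_j;q)_∞(a z_j/z_i;q)_∞(a/(z_i z_j);q)_∞ divided by the same product with a replaced by ta equals exp[∑_{k ≥ 1} (P_k² − P_{2k}) a^k (t^k − 1)/(2k(1 − q^k))], where P_k = ∑_i (z_i^k + z_i^{−k}). -/
/-- The cross-term product
`(a;q)^n ∏_{i<j} (a z_i^{±1} z_j^{±1};q)` (product over all four signs). -/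
noncomputable def crossProd (n : ℕ) (a q : ℂ) (z : Fin n → ℂ) : ℂ :=
  qPoch a q ^ n *
    ∏ i, ∏ j,
      if i < j then
        qPoch (a * z i * z j) q * qPoch (a * z i / z j) q *
          qPoch (a * z j / z i) q * qPoch (a / (z i * z j)) q
      else 1

/-!
Expanding each logarithm, `-log (x;q)_∞ = ∑_j ∑_{m ≥ 1} (x q^j)^m / m`; summing the absolutely
convergent double series over `j` first gives `∑_{m ≥ 1} x^m / (m (1 - q^m))`. Every factor of
`crossProd n a q z` is `(a μ;q)_∞` for a monomial `μ` among `1` (`n` times) and `z_i^{±1} z_j^{±1}`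
(`i < j`), so `-log crossProd` is the same series with `x^m` replaced by `p_m a^m`, where `p_m` is the
`m`-th power sum of these monomials. With `s_i = z_i^m + z_i^{-m}` one has
`p_m = n + ∑_{i<j} s_i s_j = (P_m² - P_{2m}) / 2`, and replacing `a` by `t a` multiplies the `m`-th
term by `t^m`.
-/

open Complex

noncomputable def qPochLogTerm (x q : ℂ) (k : ℕ) : ℂ :=
  x ^ (k + 1) / ((k + 1) * (1 - q ^ (k + 1)))

lemma qPochLogTerm_mul (x m q : ℂ) (k : ℕ) :
    qPochLogTerm (x * m) q k = m ^ (k + 1) * qPochLogTerm x q k := by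
  rw [qPochLogTerm, qPochLogTerm, mul_pow]
  ring

section LogQPoch

variable {x q : ℂ}

lemma norm_mul_pow_lt_one (hx : ‖x‖ < 1) (hq : ‖q‖ < 1) (j : ℕ) : ‖x * q ^ j‖ < 1 := by
  rw [norm_mul, norm_pow]
  exact mul_lt_one_of_nonneg_of_lt_one_left (norm_nonneg x) hx (pow_le_one₀ (norm_nonneg q) hq.le)

lemma summable_log_qPoch_double (hx : ‖x‖ < 1) (hq : ‖q‖ < 1) :
    Summable fun p : ℕ × ℕ => (x * q ^ p.1) ^ (p.2 + 1) / (p.2 + 1 : ℂ) := by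
  have hgeom : Summable fun p : ℕ × ℕ => ‖q‖ ^ p.1 * ‖x‖ ^ p.2 :=
    Summable.mul_of_nonneg (summable_geometric_of_lt_one (norm_nonneg _) hq)
      (summable_geometric_of_lt_one (norm_nonneg _) hx) (fun _ => by positivity)
      (fun _ => by positivity)
  refine Summable.of_norm_bounded hgeom fun ⟨j, m⟩ => ?_
  have hm : (1 : ℝ) ≤ ‖(m + 1 : ℂ)‖ := by
    rw [← Nat.cast_succ, Complex.norm_natCast]
    exact_mod_cast m.succ_pos
  have hxq : ‖x * q ^ j‖ ≤ ‖x‖ := by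
    rw [norm_mul, norm_pow]
    exact mul_le_of_le_one_right (norm_nonneg x) (pow_le_one₀ (norm_nonneg q) hq.le)
  calc ‖(x * q ^ j) ^ (m + 1) / (m + 1 : ℂ)‖ ≤ ‖x * q ^ j‖ ^ (m + 1) := by
        rw [norm_div, norm_pow]
        exact div_le_self (by positivity) hm
    _ = ‖x * q ^ j‖ ^ m * (‖x‖ * ‖q‖ ^ j) := by rw [pow_succ, norm_mul, norm_pow]
    _ ≤ ‖x‖ ^ m * (1 * ‖q‖ ^ j) := by gcongr
    _ = ‖q‖ ^ j * ‖x‖ ^ m := by ring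

lemma hasSum_log_qPoch_row (hx : ‖x‖ < 1) (hq : ‖q‖ < 1) (j : ℕ) :
    HasSum (fun m : ℕ => (x * q ^ j) ^ (m + 1) / (m + 1 : ℂ)) (-log (1 - x * q ^ j)) :=
  hasSum_taylorSeries_neg_log' (norm_mul_pow_lt_one hx hq j)

lemma hasSum_log_qPoch_column (hq : ‖q‖ < 1) (m : ℕ) :
    HasSum (fun j : ℕ => (x * q ^ j) ^ (m + 1) / (m + 1 : ℂ)) (qPochLogTerm x q m) := by
  have hqm : ‖q ^ (m + 1)‖ < 1 := by
    rw [norm_pow]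
    exact pow_lt_one₀ (norm_nonneg q) hq m.succ_ne_zero
  have hval : qPochLogTerm x q m = x ^ (m + 1) / (m + 1) * (1 - q ^ (m + 1))⁻¹ := by
    rw [qPochLogTerm, ← div_div, div_eq_mul_inv _ (1 - _)]
  rw [hval]
  refine ((hasSum_geometric_of_norm_lt_one hqm).mul_left _).congr_fun fun j => ?_
  rw [mul_pow, ← pow_mul, pow_mul']
  ring

theorem hasSum_qPochLogTerm (hx : ‖x‖ < 1) (hq : ‖q‖ < 1) :
    HasSum (qPochLogTerm x q) (∑' j : ℕ, -log (1 - x * q ^ j)) := by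
  have hsum := (summable_log_qPoch_double hx hq).hasSum
  rw [(hsum.prod_fiberwise (hasSum_log_qPoch_row hx hq)).tsum_eq]
  exact ((Equiv.prodComm ℕ ℕ).hasSum_iff.2 hsum).prod_fiberwise (hasSum_log_qPoch_column hq)

theorem qPoch_eq_exp_neg_tsum (hx : ‖x‖ < 1) (hq : ‖q‖ < 1) :
    qPoch x q = exp (-∑' k, qPochLogTerm x q k) := by
  have hne (j : ℕ) : 1 - x * q ^ j ≠ 0 := by
    refine sub_ne_zero.2 fun h => ?_
    simpa [← h] using norm_mul_pow_lt_one hx hq j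
  have hrows := ((summable_log_qPoch_double hx hq).hasSum.prod_fiberwise
    (hasSum_log_qPoch_row hx hq)).summable.hasSum
  rw [(hasSum_qPochLogTerm hx hq).tsum_eq, qPoch, ← hrows.neg.cexp.tprod_eq]
  simp only [Function.comp_def, neg_neg, exp_log (hne _)]

end LogQPoch

section PowerSums

variable {ι : Type*} [Fintype ι] [LinearOrder ι]

lemma two_mul_sum_sum_lt {R : Type*} [CommRing R] (s : ι → R) :
    2 * ∑ i, ∑ j, (if i < j then s i * s j else 0) = (∑ i, s i) ^ 2 - ∑ i, s i ^ 2 := by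
  have hsplit (i j : ι) : s i * s j = ((if i = j then s i * s j else 0) +
      (if i < j then s i * s j else 0)) + (if j < i then s j * s i else 0) := by
    rcases lt_trichotomy i j with h | rfl | h
    · simp [h, h.ne, h.not_gt]
    · simp
    · simp [h, h.ne', h.not_gt, mul_comm]
  rw [sq, Finset.sum_mul_sum, Fintype.sum_congr _ _ fun i => Fintype.sum_congr _ _ (hsplit i)]
  simp only [Finset.sum_add_distrib, Finset.sum_ite_eq, Finset.mem_univ, if_true, ← sq]
  rw [Finset.sum_comm (f := fun i j => if j < i then s j * s i else 0)]
  ring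

variable {K : Type*} [Field K]

def crossPowerSum (z : ι → K) (k : ℕ) : K :=
  Fintype.card ι + ∑ i, ∑ j, if i < j then
    (z i * z j) ^ k + (z i / z j) ^ k + (z j / z i) ^ k + (z i * z j)⁻¹ ^ k else 0

theorem two_mul_crossPowerSum {z : ι → K} (hz : ∀ i, z i ≠ 0) (k : ℕ) :
    2 * crossPowerSum z k =
      (∑ i, (z i ^ k + (z i)⁻¹ ^ k)) ^ 2 - ∑ i, (z i ^ (2 * k) + (z i)⁻¹ ^ (2 * k)) := by
  set s : ι → K := fun i => z i ^ k + (z i)⁻¹ ^ k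
  have hpair (i j : ι) :
      (z i * z j) ^ k + (z i / z j) ^ k + (z j / z i) ^ k + (z i * z j)⁻¹ ^ k = s i * s j := by
    simp only [s, div_eq_mul_inv, mul_inv, mul_pow]
    ring
  have hsq (i : ι) : s i ^ 2 = z i ^ (2 * k) + (z i)⁻¹ ^ (2 * k) + 2 := by
    have : z i ^ k * (z i)⁻¹ ^ k = 1 := by rw [← mul_pow, mul_inv_cancel₀ (hz i), one_pow]
    simp only [s, pow_mul']
    linear_combination 2 * this
  simp only [crossPowerSum, hpair, mul_add, two_mul_sum_sum_lt s, hsq,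
    Finset.sum_add_distrib, Finset.sum_const, Finset.card_univ, nsmul_eq_mul]
  ring

end PowerSums

theorem crossProd_eq_exp_neg {n : ℕ} {x q : ℂ} {z : Fin n → ℂ} (hx : ‖x‖ < 1) (hq : ‖q‖ < 1)
    (hs : ∀ i j, ‖x * z i * z j‖ < 1 ∧ ‖x * z i / z j‖ < 1 ∧ ‖x / (z i * z j)‖ < 1) :
    ∃ L, HasSum (fun k => crossPowerSum z (k + 1) * qPochLogTerm x q k) L ∧
      crossProd n x q z = exp (-L) := by
  set L : ℂ → ℂ := fun y => ∑' k, qPochLogTerm y q k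
  have hL {y : ℂ} (hy : ‖y‖ < 1) : HasSum (qPochLogTerm y q) (L y) :=
    (hasSum_qPochLogTerm hy hq).summable.hasSum
  set pairL : Fin n → Fin n → ℂ := fun i j =>
    L (x * z i * z j) + L (x * z i / z j) + L (x * z j / z i) + L (x / (z i * z j))
  have hpair (i j : Fin n) : HasSum (fun k => (if i < j then (z i * z j) ^ (k + 1) +
      (z i / z j) ^ (k + 1) + (z j / z i) ^ (k + 1) + (z i * z j)⁻¹ ^ (k + 1) else 0) *
        qPochLogTerm x q k) (if i < j then pairL i j else 0) := by
    split_ifs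
    · convert (((hL (hs i j).1).add (hL (hs i j).2.1)).add (hL (hs j i).2.1)).add
        (hL (hs i j).2.2) using 1
      ext k
      simp only [mul_assoc, mul_div_assoc, div_eq_mul_inv x, qPochLogTerm_mul]
      ring
    · simp
  refine ⟨n * L x + ∑ i, ∑ j, if i < j then pairL i j else 0, ?_, ?_⟩
  · simp only [crossPowerSum, Fintype.card_fin, add_mul, Finset.sum_mul]
    exact ((hL hx).mul_left (n : ℂ)).add (hasSum_sum fun i _ => hasSum_sum fun j _ => hpair i j)
  · have hqPoch {y : ℂ} (hy : ‖y‖ < 1) : qPoch y q = exp (-L y) := qPoch_eq_exp_neg_tsum hy hq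
    rw [crossProd, neg_add, exp_add, ← mul_neg, exp_nat_mul, ← hqPoch hx, ← Finset.sum_neg_distrib,
      exp_sum]
    congr 1
    refine Finset.prod_congr rfl fun i _ => ?_
    rw [← Finset.sum_neg_distrib, exp_sum]
    refine Finset.prod_congr rfl fun j _ => ?_
    split_ifs
    · simp only [pairL, neg_add, exp_add, hqPoch (hs i j).1, hqPoch (hs i j).2.1,
        hqPoch (hs j i).2.1, hqPoch (hs i j).2.2]
    · simp

/-- The interaction factor lift:
`[(a;q)^n ∏_{i<j}(a z_i^{±1}z_j^{±1};q)] / [(ta;q)^n ∏_{i<j}(ta z_i^{±1}z_j^{±1};q)]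
  = exp[∑_{k≥1} (P_k² − P_{2k}) a^k (t^k − 1)/(2k(1 − q^k))]`,
where `P_k = ∑_i (z_i^k + z_i^{−k})`. -/
theorem interaction_product_lift (n : ℕ) (a q t : ℂ) (ha : ‖a‖ < 1)
    (hta : ‖t * a‖ < 1) (hq : ‖q‖ < 1) (z : Fin n → ℂ) (hz : ∀ i, z i ≠ 0)
    (hsmall : ∀ i j, ‖a * z i * z j‖ < 1 ∧ ‖a * z i / z j‖ < 1 ∧
      ‖a / (z i * z j)‖ < 1)
    (hsmall' : ∀ i j, ‖t * a * z i * z j‖ < 1 ∧ ‖t * a * z i / z j‖ < 1 ∧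
      ‖t * a / (z i * z j)‖ < 1) :
    crossProd n a q z / crossProd n (t * a) q z =
      Complex.exp (∑' k : ℕ,
        ((∑ i, (z i ^ (k + 1) + (z i)⁻¹ ^ (k + 1))) ^ 2 -
            (∑ i, (z i ^ (2 * (k + 1)) + (z i)⁻¹ ^ (2 * (k + 1))))) *
          a ^ (k + 1) * (t ^ (k + 1) - 1) /
          (2 * ((k : ℂ) + 1) * (1 - q ^ (k + 1)))) := by
  obtain ⟨A, hA, hcrossA⟩ := crossProd_eq_exp_neg ha hq hsmall
  obtain ⟨B, hB, hcrossB⟩ := crossProd_eq_exp_neg hta hq hsmall'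
  rw [hcrossA, hcrossB, ← exp_sub, neg_sub_neg]
  refine congrArg exp ((hB.sub hA).congr_fun fun k => ?_).tsum_eq.symm
  rw [mul_comm t a, qPochLogTerm_mul, ← two_mul_crossPowerSum hz]
  simp only [qPochLogTerm, div_mul_eq_div_div_swap]
  ring
end
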